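/- arXiv:math/0402324 — 8 statements merged into one kernel-verified Lean document; each statement's English description precedes it below -/
import Mathlib

section
/- For any integers r ≥ 2 and q ≥ 2 with r dividing q, there is no I-cycle for the arithmetic-progression index set I = {0, q^r/r, 2q^r/r, ..., (r-1)q^r/r} ⊆ Z_{q^r}. That is, AP(r, q^r/r) is q-invalid. -/
/-!
The map sending `t` to the word `j ↦ χ (j·d + t)` read at the shifted progression is a surjection
between two sets of size `q^r`, hence a bijection. Because `r·d = q^r`, shifting `t` by `d` rotates
that word cyclically, so the shift fixes the position of a constant word; injectivity then forces
`d ≡ 0 (mod q^r)`, which is impossible for `0 < d < q^r`.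
-/

open Function

namespace ZMod

variable {n r d : ℕ} {α : Type*}

def window (χ : ZMod n → α) (r d : ℕ) (t : ZMod n) : Fin r → α :=
  fun j => χ (((j : ℕ) * d : ℕ) + t)

theorem natCast_mod_mul_eq (h : r * d = n) (a : ℕ) :
    (((a % r) * d : ℕ) : ZMod n) = ((a * d : ℕ) : ZMod n) :=
  (ZMod.natCast_eq_natCast_iff _ _ _).2 (h ▸ (Nat.mod_modEq a r).mul_right' d)

theorem window_add (h : r * d = n) (χ : ZMod n → α) (t : ZMod n) :
    window χ r d (t + d) = window χ r d t ∘ finRotate r := by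
  funext j
  have := j.neZero
  have hval : (finRotate r j : ℕ) = (j + 1) % r := by
    rw [finRotate_apply, Fin.val_add, Fin.val_one', Nat.add_mod_mod]
  simp only [window, comp_apply, hval, natCast_mod_mul_eq h]
  push_cast
  congr 1
  ring

theorem natCast_eq_zero_of_surjective_window [Fintype α] [NeZero n] (h : r * d = n)
    (hcard : Fintype.card α ^ r = n) {χ : ZMod n → α} (hχ : Surjective (window χ r d)) :
    (d : ZMod n) = 0 := by
  have hinj : Injective (window χ r d) :=
    ((Fintype.bijective_iff_surjective_and_card _).2
      ⟨hχ, by simp [ZMod.card, hcard]⟩).1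
  obtain ⟨t, ht⟩ := hχ fun _ => χ 0
  have hshift : window χ r d (t + d) = window χ r d t := by
    rw [window_add h, ht]; rfl
  simpa using hinj hshift

end ZMod

theorem stmt_2_general (q r : ℕ) (hr : 2 ≤ r) (hdvd : r ∣ q) :
    ¬ ∃ χ : ZMod (q ^ r) → Fin q, ∀ W : Fin r → Fin q, ∃ t : ZMod (q ^ r),
      ∀ j : Fin r, χ ((((j : ℕ) * (q ^ r / r) : ℕ) : ZMod (q ^ r)) + t) = W j := by
  rintro ⟨χ, hχ⟩
  have hq : 0 < q := (χ 0).pos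
  have hqr : r * (q ^ r / r) = q ^ r :=
    Nat.mul_div_cancel' (hdvd.trans (dvd_pow_self q (by omega)))
  have hpos : 0 < q ^ r / r := Nat.div_pos
    ((Nat.le_of_dvd hq hdvd).trans (Nat.le_self_pow (by omega) q)) (by omega)
  have hlt : q ^ r / r < q ^ r := Nat.div_lt_self (by positivity) (by omega)
  have : NeZero (q ^ r) := ⟨by positivity⟩
  have hzero := ZMod.natCast_eq_zero_of_surjective_window hqr (by simp)
    (fun W => (hχ W).imp fun _ ht => funext ht)
  have := Nat.le_of_dvd hpos ((ZMod.natCast_eq_zero_iff _ _).1 hzero)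
  omega

/-- For `r ≥ 2`, `q ≥ 2` with `r ∣ q`, the set `AP(r, q^r / r)` is `q`-invalid:
there is no `I`-cycle for `I = {0, q^r/r, …, (r-1)·q^r/r} ⊆ ZMod (q^r)`. -/
theorem stmt_2 (q r : ℕ) (hq : 2 ≤ q) (hr : 2 ≤ r) (hdvd : r ∣ q) :
    ¬ ∃ χ : ZMod (q ^ r) → Fin q, ∀ W : Fin r → Fin q, ∃ t : ZMod (q ^ r),
      ∀ j : Fin r, χ ((((j : ℕ) * (q ^ r / r) : ℕ) : ZMod (q ^ r)) + t) = W j :=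
  stmt_2_general q r hr hdvd
end

section
/- Let (q_0, q_1, ..., q_{r-1}) be a closed walk (cycle) in D_q^{n-1}, meaning each consecutive pair of (n-1)-windows ((q_{i+1},...,q_{i+n-1}), (q_{i+2},...,q_{i+n})) is an edge with indices mod r. Then this cycle lifts under the inverse of the map λ(x) = (x_1-x_2, ..., x_{n-1}-x_n) to a cycle in D_q^n if and only if the sum q_0 + q_1 + ... + q_{r-1} ≡ 0 (mod q). -/
/-- A cycle `(q_0, …, q_{r-1})` in `D_q^{n-1}` (given by an `r`-periodic symbol
sequence `s`, whose vertices are the windows `(s_{i+1}, …, s_{i+n-1})`) lifts under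
`λ⁻¹`, where `λ x = (x_1 - x_2, …, x_{n-1} - x_n)`, to a cycle in `D_q^n`
(here `n = m + 2`) if and only if `s_0 + s_1 + ⋯ + s_{r-1} = 0` in `ZMod q`. -/
theorem stmt_5 (q m r : ℕ) (hq : 2 ≤ q) (hr : 1 ≤ r)
    (s : ℕ → ZMod q) (hper : ∀ i, s (i + r) = s i) :
    (∃ x : ℕ → (Fin (m + 2) → ZMod q),
      (∀ i, x (i + r) = x i) ∧
      (∀ i, ∀ l : Fin (m + 1), x i l.succ = x (i + 1) l.castSucc) ∧
      (∀ i, ∀ j : Fin (m + 1), x i j.castSucc - x i j.succ = s (i + 1 + j))) ↔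
    ∑ i ∈ Finset.range r, s i = 0 := by
  -- sums of r consecutive terms of a periodic sequence are all equal
  have per_sum : ∀ i, ∑ k ∈ Finset.range r, s (i + k) = ∑ k ∈ Finset.range r, s k := by
    intro i
    induction i with
    | zero => simp
    | succ n ih =>
      have h1 : ∑ k ∈ Finset.range (r + 1), s (n + k)
          = (∑ k ∈ Finset.range r, s (n + (k + 1))) + s (n + 0) :=
        Finset.sum_range_succ' (fun k => s (n + k)) r
      have h2 : ∑ k ∈ Finset.range (r + 1), s (n + k)
          = (∑ k ∈ Finset.range r, s (n + k)) + s (n + r) :=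
        Finset.sum_range_succ (fun k => s (n + k)) r
      have h3 : ∑ k ∈ Finset.range r, s (n + 1 + k)
          = ∑ k ∈ Finset.range r, s (n + (k + 1)) := by
        apply Finset.sum_congr rfl
        intro k _
        congr 1
        omega
      rw [h3]
      have h4 := hper n
      rw [h4, Nat.add_zero] at h2
      rw [h1] at h2
      have : ∑ k ∈ Finset.range r, s (n + (k + 1)) = ∑ k ∈ Finset.range r, s (n + k) := by
        exact add_right_cancel h2
      rw [this, ih]
  constructor
  · rintro ⟨x, hxper, hshift, hdiff⟩
    -- single step relation
    have step : ∀ i, x i 0 - x (i + 1) 0 = s (i + 1) := by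
      intro i
      have h1 := hdiff i 0
      have h2 := hshift i 0
      simp only [Fin.castSucc_zero, Fin.succ_zero_eq_one] at h1 h2
      rw [h2] at h1
      simpa using h1
    have key : ∀ i, ∑ k ∈ Finset.range i, s (k + 1) = x 0 0 - x i 0 := by
      intro i
      induction i with
      | zero => simp
      | succ n ih =>
        rw [Finset.sum_range_succ, ih]
        have := step n
        linear_combination -this
    have h0 : ∑ k ∈ Finset.range r, s (k + 1) = 0 := by
      rw [key r]
      have := hxper 0
      rw [Nat.zero_add] at this
      rw [this]
      ring
    have : ∑ k ∈ Finset.range r, s (1 + k) = ∑ k ∈ Finset.range r, s (k + 1) := by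
      apply Finset.sum_congr rfl; intro k _; congr 1; omega
    rw [← per_sum 1, this, h0]
  · intro hsum
    refine ⟨fun i j => -∑ k ∈ Finset.range (i + j.val), s (k + 1), ?_, ?_, ?_⟩
    · intro i
      funext j
      have : ∑ k ∈ Finset.range (i + r + j.val), s (k + 1)
          = ∑ k ∈ Finset.range (i + j.val), s (k + 1) := by
        have hsplit : ∑ k ∈ Finset.range (i + j.val + r), s (k + 1)
            = (∑ k ∈ Finset.range (i + j.val), s (k + 1))
              + ∑ k ∈ Finset.range r, s (i + j.val + k + 1) :=
          Finset.sum_range_add (fun k => s (k + 1)) (i + j.val) r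
        have hz : ∑ k ∈ Finset.range r, s (i + j.val + k + 1) = 0 := by
          have : ∑ k ∈ Finset.range r, s (i + j.val + k + 1)
              = ∑ k ∈ Finset.range r, s ((i + j.val + 1) + k) := by
            apply Finset.sum_congr rfl; intro k _; congr 1; omega
          rw [this, per_sum, hsum]
        have harg : i + r + j.val = i + j.val + r := by omega
        rw [harg, hsplit, hz, add_zero]
      simp only [this]
    · intro i l
      simp only [Fin.val_succ, Fin.coe_castSucc]
      have h : i + (l.val + 1) = i + 1 + l.val := by omega
      rw [h]
    · intro i j
      simp only [Fin.coe_castSucc, Fin.val_succ]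
      have hsucc : ∑ k ∈ Finset.range (i + (j.val + 1)), s (k + 1)
          = (∑ k ∈ Finset.range (i + j.val), s (k + 1)) + s (i + j.val + 1) := by
        have harg : i + (j.val + 1) = (i + j.val) + 1 := by omega
        rw [harg, Finset.sum_range_succ]
      rw [hsucc]
      have harg2 : i + 1 + (j : ℕ) = i + j.val + 1 := by omega
      rw [harg2]
      ring
end

section
/- Let q be a prime power, α a generator of the multiplicative group of F_{q^n}, B a basis of F_{q^n} over F_q, v ∈ F_q^n a nonzero vector, and I = {i_1,...,i_n} distinct integers. Suppose the minimal polynomial of α does not divide ∑_{j=1}^n c_j x^{i_j} for any nonzero (c_1,...,c_n) ∈ F_q^n. Then the map Ψ : F_{q^n} → F_q^n sending 0 to 0 and α^t to (v^T f_B(α^{i_1 + t}), ..., v^T f_B(α^{i_n + t})) is an isomorphism of additive groups. -/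
/-!
Let `φ = vᵀ f_B`, a nonzero `K`-linear functional on `L`. Since every nonzero element of `L`
is a power of `α`, `Ψ` is the `K`-linear map `x ↦ (φ (α^{i_j} x))_j`, so it is additive, and as
`L` and `Kⁿ` both have dimension `n` it suffices to show it is injective. The hypothesis on the
minimal polynomial says precisely that the `α^{i_j}` are linearly independent; so for `x ≠ 0`
the `n` elements `α^{i_j} x` form a basis of `L`, and `Ψ x = 0` would force `φ = 0`.
-/

open Module Polynomial

theorem eq_of_forall_pow_eq {G₀ M : Type*} [GroupWithZero G₀] [Finite G₀] (α : G₀ˣ)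
    (hα : ∀ u : G₀ˣ, u ∈ Subgroup.zpowers α) {f g : G₀ → M} (h0 : f 0 = g 0)
    (hpow : ∀ t : ℕ, f ((α : G₀) ^ t) = g ((α : G₀) ^ t)) : f = g := by
  funext x
  rcases eq_or_ne x 0 with rfl | hx
  · exact h0
  obtain ⟨t, ht⟩ := mem_powers_iff_mem_zpowers.2 (hα (Units.mk0 x hx))
  have hxt : (α : G₀) ^ t = x := by simpa using congrArg Units.val ht
  rw [← hxt, hpow]

section

variable {K L ι : Type*} [Field K] [Ring L] [Algebra K L]

theorem linearIndependent_pow_of_not_minpoly_dvd [Fintype ι] (a : L) (i : ι → ℕ)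
    (h : ∀ c : ι → K, c ≠ 0 → ¬ minpoly K a ∣ ∑ j, C (c j) * X ^ i j) :
    LinearIndependent K fun j => a ^ i j := by
  rw [Fintype.linearIndependent_iff]
  by_contra! ⟨c, hc, j, hj⟩
  refine h c (Function.ne_iff.2 ⟨j, hj⟩) (minpoly.dvd K a ?_)
  simpa [Algebra.smul_def] using hc

theorem LinearIndependent.mul_right_of_ne_zero [IsDomain L] {f : ι → L}
    (hf : LinearIndependent K f) {x : L} (hx : x ≠ 0) :
    LinearIndependent K fun j => f j * x :=
  hf.map' (LinearMap.mulRight K x) (LinearMap.ker_eq_bot.2 (mul_left_injective₀ hx))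

theorem bijective_pi_comp_mulLeft [Fintype ι] [IsDomain L] [FiniteDimensional K L] {f : ι → L}
    (hf : LinearIndependent K f) (hcard : Fintype.card ι = finrank K L) {φ : L →ₗ[K] K}
    (hφ : φ ≠ 0) :
    Function.Bijective (LinearMap.pi fun j => φ ∘ₗ LinearMap.mulLeft K (f j)) := by
  have hinj : Function.Injective (LinearMap.pi fun j => φ ∘ₗ LinearMap.mulLeft K (f j)) := by
    refine (injective_iff_map_eq_zero _).2 fun x hx => ?_
    by_contra hx0
    refine hφ (LinearMap.ext_on_range
      ((hf.mul_right_of_ne_zero hx0).span_eq_top_of_card_eq_finrank' hcard) fun j => ?_)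
    exact congrFun hx j
  refine ⟨hinj, (LinearMap.injective_iff_surjective_of_finrank_eq_finrank ?_).1 hinj⟩
  rw [finrank_fintype_fun_eq_card, hcard]

end

theorem stmt_7_general (K L : Type*) [Field K] [Field L] [Algebra K L]
    [Fintype L]
    (n : ℕ) (B : Module.Basis (Fin n) K L)
    (α : Lˣ) (hα : ∀ u : Lˣ, u ∈ Subgroup.zpowers α)
    (v : Fin n → K) (hv : v ≠ 0)
    (i : Fin n → ℕ)
    (hmin : ∀ c : Fin n → K, c ≠ 0 →
      ¬ (minpoly K (α : L) ∣ ∑ j, Polynomial.C (c j) * Polynomial.X ^ (i j)))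
    (Ψ : L → (Fin n → K))
    (hΨ0 : Ψ 0 = 0)
    (hΨpow : ∀ t : ℕ, Ψ ((α : L) ^ t) =
      fun j => ∑ k, v k * B.repr ((α : L) ^ (i j + t)) k) :
    Function.Bijective Ψ ∧ ∀ x y : L, Ψ (x + y) = Ψ x + Ψ y := by
  have : FiniteDimensional K L := .of_basis B
  set φ : L →ₗ[K] K := B.constr K v
  have hφ : φ ≠ 0 := fun h => hv (funext fun k => by
    simpa [φ] using LinearMap.congr_fun h (B k))
  set T := LinearMap.pi fun j => φ ∘ₗ LinearMap.mulLeft K ((α : L) ^ i j)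
  have hΨT : Ψ = T := eq_of_forall_pow_eq α hα (by simp [hΨ0]) fun t => by
    funext j
    simp [hΨpow, T, φ, pow_add, mul_comm]
  rw [hΨT]
  exact ⟨bijective_pi_comp_mulLeft (linearIndependent_pow_of_not_minpoly_dvd _ i hmin)
    (by simp [finrank_eq_card_basis B]) hφ, map_add T⟩

/-- Let `L/K` be an extension of finite fields of degree `n`, `α` a generator of `Lˣ`,
`B` a `K`-basis of `L`, `v ≠ 0`, and `I = {i_1, …, i_n}` distinct exponents. If the
minimal polynomial of `α` divides no nonzero combination `∑ c_j x^{i_j}`, then the map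
`Ψ` sending `0` to `0` and `α^t` to `(vᵀ f_B(α^{i_1+t}), …, vᵀ f_B(α^{i_n+t}))` is an
isomorphism of additive groups from `L` to `Kⁿ`. -/
theorem stmt_7 (K L : Type*) [Field K] [Field L] [Algebra K L]
    [Fintype K] [Fintype L]
    (n : ℕ) (hn : 1 ≤ n) (B : Module.Basis (Fin n) K L)
    (α : Lˣ) (hα : ∀ u : Lˣ, u ∈ Subgroup.zpowers α)
    (v : Fin n → K) (hv : v ≠ 0)
    (i : Fin n → ℕ) (hi : Function.Injective i)
    (hmin : ∀ c : Fin n → K, c ≠ 0 →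
      ¬ (minpoly K (α : L) ∣ ∑ j, Polynomial.C (c j) * Polynomial.X ^ (i j)))
    (Ψ : L → (Fin n → K))
    (hΨ0 : Ψ 0 = 0)
    (hΨpow : ∀ t : ℕ, Ψ ((α : L) ^ t) =
      fun j => ∑ k, v k * B.repr ((α : L) ^ (i j + t)) k) :
    Function.Bijective Ψ ∧ ∀ x y : L, Ψ (x + y) = Ψ x + Ψ y :=
  stmt_7_general K L n B α hα v hv i hmin Ψ hΨ0 hΨpow
end

section
/- If the index set I = {i_1,...,i_n} ⊆ Z_{q^n - 1} is ordinary for q (i.e., there exists a generator α of F_{q^n}^× such that {α^{i_1},...,α^{i_n}} is linearly independent over F_q), then I is q*-valid: there exists a map χ : Z_{q^n - 1} → F_q such that every nonzero word in F_q^n appears on some translate of I. -/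
/-!
Fix a nonzero `K`-linear functional `f` on `L` and put `χ s = f (α ^ s)`. The word read on the
translate `I + t` is `(f (α ^ i_j * α ^ t))_j`, so it suffices that `β ↦ (f (α ^ i_j * β))_j` maps
`L` onto `Kⁿ`: a nonzero word then comes from some `β ≠ 0`, and `β = α ^ t` since `α` generates
`Lˣ`. If `f (α ^ i_j * β) = 0` for all `j`, then `f (x * β) = 0` for every `x` because the
`α ^ i_j` span `L`, which forces `β = 0`; so the map is injective, hence bijective by dimension.
-/

section WordMap

variable {K L ι : Type*} [Field K] [DivisionRing L] [Algebra K L]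

def wordMap (f : Module.Dual K L) (v : ι → L) : L →ₗ[K] ι → K :=
  LinearMap.pi fun j => f ∘ₗ LinearMap.mulLeft K (v j)

@[simp]
theorem wordMap_apply (f : Module.Dual K L) (v : ι → L) (β : L) (j : ι) :
    wordMap f v β j = f (v j * β) :=
  rfl

theorem wordMap_injective {f : Module.Dual K L} (hf : f ≠ 0) {v : ι → L}
    (hv : Submodule.span K (Set.range v) = ⊤) : Function.Injective (wordMap f v) := by
  refine (injective_iff_map_eq_zero _).2 fun β hβ => ?_
  by_contra hβ0
  have hvanish : f ∘ₗ LinearMap.mulRight K β = 0 :=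
    LinearMap.ext_on_range hv fun j => congrFun hβ j
  refine hf (LinearMap.ext fun y => ?_)
  simpa [hβ0] using LinearMap.congr_fun hvanish (y * β⁻¹)

theorem wordMap_surjective [Fintype ι] [FiniteDimensional K L] {f : Module.Dual K L}
    (hf : f ≠ 0) {v : ι → L} (hv : LinearIndependent K v)
    (hcard : Fintype.card ι = Module.finrank K L) : Function.Surjective (wordMap f v) := by
  refine (LinearMap.injective_iff_surjective_of_finrank_eq_finrank ?_).1
    (wordMap_injective hf (hv.span_eq_top_of_card_eq_finrank' hcard))
  simp [hcard]

end WordMap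

theorem pow_val_natCast_add {G : Type*} [Monoid G] {g : G} {m : ℕ} [NeZero m] (hg : g ^ m = 1)
    (a : ℕ) (t : ZMod m) : g ^ ((a : ZMod m) + t).val = g ^ a * g ^ t.val := by
  rw [ZMod.val_add, ← pow_eq_pow_mod _ hg, ZMod.val_natCast, pow_add, ← pow_eq_pow_mod _ hg]

theorem stmt_9_general (K L : Type*) [Field K] [Field L] [Algebra K L]
    [Fintype K] [Fintype L]
    (n : ℕ) (hrank : Module.finrank K L = n)
    (i : Fin n → ℕ)
    (hord : ∃ α : Lˣ, (∀ u : Lˣ, u ∈ Subgroup.zpowers α) ∧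
      LinearIndependent K (fun j : Fin n => ((α : L) ^ (i j)))) :
    ∃ χ : ZMod (Fintype.card L - 1) → K,
      ∀ W : Fin n → K, W ≠ 0 → ∃ t : ZMod (Fintype.card L - 1),
        ∀ j : Fin n, χ (((i j : ℕ) : ZMod (Fintype.card L - 1)) + t) = W j := by
  classical
  obtain ⟨α, hgen, hli⟩ := hord
  obtain ⟨f, hf⟩ := Module.Projective.exists_dual_ne_zero K (one_ne_zero (α := L))
  have hsurj := wordMap_surjective (f := f) (by rintro rfl; exact hf rfl) hli (by simp [hrank])
  have hcard : Fintype.card Lˣ = Fintype.card L - 1 := Fintype.card_units L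
  have : NeZero (Fintype.card L - 1) := ⟨hcard ▸ Fintype.card_ne_zero⟩
  refine ⟨fun s => f ((α : L) ^ s.val), fun W hW => ?_⟩
  obtain ⟨β, rfl⟩ := hsurj W
  have hβ : β ≠ 0 := by rintro rfl; simp at hW
  have hlog : ∃ t : ZMod (Fintype.card Lˣ), Units.mk0 β hβ = α ^ t.val :=
    (IsCyclic.unique_zpow_zmod hgen _).exists
  rw [hcard] at hlog
  obtain ⟨t, ht⟩ := hlog
  refine ⟨t, fun j => ?_⟩
  have hαt : (α : L) ^ t.val = β := by simpa using congrArg Units.val ht.symm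
  have hα : α ^ (Fintype.card L - 1) = 1 := hcard ▸ pow_card_eq_one
  have hshift := pow_val_natCast_add hα (i j) t
  simpa [← hαt] using congrArg (fun u : Lˣ => f u) hshift

/-- If the index set `I = {i_1, …, i_n}` is ordinary for `q` (there is a generator `α`
of `Lˣ` with `α^{i_1}, …, α^{i_n}` linearly independent over `K`), then `I` is
`q*`-valid: some `χ : ZMod (q^n - 1) → K` achieves every nonzero word of `Kⁿ` on a
translate of `I`. Here `L/K` are finite fields with `[L : K] = n`, so
`card L - 1 = q^n - 1`. -/
theorem stmt_9 (K L : Type*) [Field K] [Field L] [Algebra K L]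
    [Fintype K] [Fintype L]
    (n : ℕ) (hn : 1 ≤ n) (hrank : Module.finrank K L = n)
    (i : Fin n → ℕ) (hi : Function.Injective i)
    (hord : ∃ α : Lˣ, (∀ u : Lˣ, u ∈ Subgroup.zpowers α) ∧
      LinearIndependent K (fun j : Fin n => ((α : L) ^ (i j)))) :
    ∃ χ : ZMod (Fintype.card L - 1) → K,
      ∀ W : Fin n → K, W ≠ 0 → ∃ t : ZMod (Fintype.card L - 1),
        ∀ j : Fin n, χ (((i j : ℕ) : ZMod (Fintype.card L - 1)) + t) = W j :=
  stmt_9_general K L n hrank i hord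
end

section
/- Let q be a prime power, n ≥ 1, and d a positive integer with gcd(q^n - 1, d) = 1. Then for any integer a, the arithmetic-progression index set {a, a+d, a+2d, ..., a+(n-1)d} is ordinary for q: there exists a generator α of F_{q^n}^× such that α^a, α^{a+d}, ..., α^{a+(n-1)d} are linearly independent over F_q. -/
/-- If `gcd(q^n - 1, d) = 1`, then the arithmetic progression
`{a, a+d, …, a+(n-1)d}` is ordinary for `q`: there exists a generator `α` of `Lˣ`
with `α^a, α^{a+d}, …, α^{a+(n-1)d}` linearly independent over `K`. Here `L/K` are
finite fields with `[L : K] = n`, so `card L - 1 = q^n - 1`. -/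
theorem stmt_10 (K L : Type*) [Field K] [Field L] [Algebra K L]
    [Fintype K] [Fintype L]
    (n : ℕ) (hn : 1 ≤ n) (hrank : Module.finrank K L = n)
    (d : ℕ) (hd : 0 < d) (hcop : Nat.Coprime (Fintype.card L - 1) d) (a : ℕ) :
    ∃ α : Lˣ, (∀ u : Lˣ, u ∈ Subgroup.zpowers α) ∧
      LinearIndependent K (fun j : Fin n => ((α : L) ^ (a + (j : ℕ) * d))) := by
  classical
  obtain ⟨γ, hγ⟩ := IsCyclic.exists_generator (α := Lˣ)
  have hcard : Nat.card Lˣ = Fintype.card L - 1 := by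
    rw [Nat.card_eq_fintype_card, Fintype.card_units]
  have hcop' : (Nat.card Lˣ).Coprime d := by rw [hcard]; exact hcop
  set α : Lˣ := (powCoprime hcop').symm γ with hα
  have hαd : α ^ d = γ := (powCoprime hcop').apply_symm_apply γ
  have hgen : ∀ u : Lˣ, u ∈ Subgroup.zpowers α := by
    intro u
    obtain ⟨k, hk⟩ := hγ u
    exact ⟨(d : ℤ) * k, by show α ^ ((d:ℤ)*k) = u; rw [zpow_mul, zpow_natCast, hαd]; exact hk⟩
  refine ⟨α, hgen, ?_⟩
  -- γ generates L over K
  have hint : IsIntegral K ((γ : L)) := IsIntegral.of_finite K _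
  have htop : IntermediateField.adjoin K {(γ : L)} = ⊤ := by
    rw [eq_top_iff]
    intro x _
    rcases eq_or_ne x 0 with rfl | hx
    · exact zero_mem _
    · obtain ⟨k, hk⟩ := hγ (Units.mk0 x hx)
      have : x = (γ : L) ^ k := by
        have := congrArg (Units.val) hk
        simpa using this.symm
      rw [this]
      exact zpow_mem (IntermediateField.mem_adjoin_simple_self K _) k
  have hdeg : (minpoly K ((γ : L))).natDegree = n := by
    rw [← IntermediateField.adjoin.finrank hint, htop, IntermediateField.finrank_top', hrank]
  have hli : LinearIndependent K fun i : Fin n => (γ : L) ^ (i : ℕ) := by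
    have := linearIndependent_pow (K := K) ((γ : L))
    rwa [hdeg] at this
  have hne : ((α : L) ^ a) ≠ 0 := pow_ne_zero _ (Units.ne_zero α)
  have hmap := hli.map' (LinearMap.mulLeft K ((α : L) ^ a))
    (LinearMap.ker_eq_bot.mpr (mul_right_injective₀ hne))
  have heq : (fun j : Fin n => ((α : L) ^ (a + (j : ℕ) * d)))
      = (LinearMap.mulLeft K ((α : L) ^ a)) ∘ (fun i : Fin n => (γ : L) ^ (i : ℕ)) := by
    funext j
    simp only [Function.comp_apply, LinearMap.mulLeft_apply]
    have : (γ : L) = (α : L) ^ d := by rw [← hαd]; norm_cast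
    rw [this, pow_add, ← pow_mul, mul_comm (j : ℕ) d]
  rw [heq]
  exact hmap
end

section
/- For every set X of n distinct real numbers, there exists α ∈ ℝ such that for all distinct x_j, x_k ∈ X, the distance from α(x_j - x_k) to the nearest integer is at least n^{-2}. (I.e., μ(X) ≥ n^{-2}.) -/
open MeasureTheory Set

private lemma piece_vol (d δ : ℝ) (hd : d ≠ 0) (m : ℤ) :
    volume ((fun α : ℝ => α * d) ⁻¹' Ioo ((m : ℝ) - δ) ((m : ℝ) + δ)) =
      ENNReal.ofReal (2 * δ / |d|) := by
  rw [Real.volume_preimage_mul_right hd, Real.volume_Ioo,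
    ← ENNReal.ofReal_mul (abs_nonneg _)]
  congr 1
  rw [abs_inv]
  have : |d| ≠ 0 := abs_ne_zero.mpr hd
  field_simp
  ring

private lemma badset_vol (d δ T : ℝ) (hd : d ≠ 0) (hδ : 0 < δ) (hT : 0 ≤ T) :
    volume {α : ℝ | α ∈ Icc 0 T ∧ ∃ m : ℤ, |α * d - m| < δ} ≤
      ENNReal.ofReal ((T * |d| + 2 * δ + 1) * (2 * δ / |d|)) := by
  set lo : ℤ := ⌈min 0 (T * d) - δ⌉ with hlo
  set hi : ℤ := ⌊max 0 (T * d) + δ⌋ with hhi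
  have hsub : {α : ℝ | α ∈ Icc 0 T ∧ ∃ m : ℤ, |α * d - m| < δ} ⊆
      ⋃ m ∈ Finset.Icc lo hi, (fun α : ℝ => α * d) ⁻¹' Ioo ((m : ℝ) - δ) ((m : ℝ) + δ) := by
    rintro α ⟨⟨h0, hT'⟩, m, hm⟩
    have h1 : min 0 (T * d) ≤ α * d := by
      rcases le_or_gt 0 d with h | h
      · exact le_trans (min_le_left _ _) (by positivity)
      · exact le_trans (min_le_right _ _) (by nlinarith)
    have h2 : α * d ≤ max 0 (T * d) := by
      rcases le_or_gt 0 d with h | h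
      · exact le_trans (by nlinarith) (le_max_right _ _)
      · exact le_trans (by nlinarith) (le_max_left _ _)
    rw [abs_lt] at hm
    simp only [Set.mem_iUnion, Set.mem_preimage, Set.mem_Ioo]
    exact ⟨m, Finset.mem_Icc.mpr ⟨Int.ceil_le.mpr (by linarith), Int.le_floor.mpr (by linarith)⟩,
      by constructor <;> linarith⟩
  have hcard : ((Finset.Icc lo hi).card : ℝ) ≤ T * |d| + 2 * δ + 1 := by
    have h1 : (lo : ℝ) ≥ min 0 (T * d) - δ := Int.le_ceil _
    have h2 : (hi : ℝ) ≤ max 0 (T * d) + δ := Int.floor_le _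
    have h3 : max 0 (T * d) - min 0 (T * d) = T * |d| := by
      rcases le_or_gt 0 d with h | h
      · rw [max_eq_right (by positivity), min_eq_left (by positivity), abs_of_nonneg h]
        ring
      · rw [max_eq_left (by nlinarith), min_eq_right (by nlinarith), abs_of_neg h]
        ring
    rcases le_or_gt lo hi with h | h
    · rw [Int.card_Icc]
      have hnn : (0 : ℤ) ≤ hi + 1 - lo := by omega
      have : (((hi + 1 - lo).toNat : ℤ) : ℝ) = ((hi : ℝ) + 1 - lo) := by
        rw [Int.toNat_of_nonneg hnn]; push_cast; ring
      rw [show (((hi + 1 - lo).toNat : ℕ) : ℝ) = (((hi + 1 - lo).toNat : ℤ) : ℝ) by push_cast; ring,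
        this]
      nlinarith [h3]
    · rw [Finset.Icc_eq_empty (by omega : ¬ lo ≤ hi)]
      simp only [Finset.card_empty, Nat.cast_zero]
      nlinarith [abs_pos.mpr hd, h3]
  calc volume {α : ℝ | α ∈ Icc 0 T ∧ ∃ m : ℤ, |α * d - m| < δ}
      ≤ volume (⋃ m ∈ Finset.Icc lo hi,
          (fun α : ℝ => α * d) ⁻¹' Ioo ((m : ℝ) - δ) ((m : ℝ) + δ)) := measure_mono hsub
    _ ≤ ∑ m ∈ Finset.Icc lo hi,
          volume ((fun α : ℝ => α * d) ⁻¹' Ioo ((m : ℝ) - δ) ((m : ℝ) + δ)) :=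
        measure_biUnion_finset_le _ _
    _ = (Finset.Icc lo hi).card • ENNReal.ofReal (2 * δ / |d|) := by
        rw [Finset.sum_congr rfl fun m _ => piece_vol d δ hd m, Finset.sum_const]
    _ ≤ ENNReal.ofReal ((T * |d| + 2 * δ + 1) * (2 * δ / |d|)) := by
        rw [nsmul_eq_mul, ← ENNReal.ofReal_natCast, ← ENNReal.ofReal_mul (by positivity)]
        exact ENNReal.ofReal_le_ofReal (by
          have : 0 ≤ 2 * δ / |d| := by positivity
          nlinarith)

private lemma card_filter_lt (n : ℕ) :
    2 * ((Finset.univ.filter fun p : Fin n × Fin n => p.1 < p.2).card) = n * n - n := by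
  classical
  have hswap : (Finset.univ.filter fun p : Fin n × Fin n => p.2 < p.1).card
      = (Finset.univ.filter fun p : Fin n × Fin n => p.1 < p.2).card := by
    apply Finset.card_nbij (fun p => p.swap)
    · intro p hp
      simp only [Finset.mem_coe, Finset.mem_filter] at *
      exact ⟨Finset.mem_univ _, hp.2⟩
    · intro p _ q _ h
      exact Prod.swap_injective h
    · intro p hp
      refine ⟨p.swap, ?_, by simp⟩
      simp only [Finset.mem_coe, Finset.mem_filter] at *
      exact ⟨Finset.mem_univ _, hp.2⟩
  have hunion : (Finset.univ.filter fun p : Fin n × Fin n => p.2 < p.1) ∪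
      (Finset.univ.filter fun p : Fin n × Fin n => p.1 < p.2)
      = Finset.univ.filter fun p : Fin n × Fin n => p.1 ≠ p.2 := by
    ext p
    simp only [Finset.mem_union, Finset.mem_filter, Finset.mem_univ, true_and]
    constructor
    · rintro (h | h)
      · exact h.ne'
      · exact h.ne
    · intro h
      rcases lt_or_gt_of_ne h with h' | h'
      · exact Or.inr h'
      · exact Or.inl h'
  have hdisj : Disjoint (Finset.univ.filter fun p : Fin n × Fin n => p.2 < p.1)
      (Finset.univ.filter fun p : Fin n × Fin n => p.1 < p.2) := by
    rw [Finset.disjoint_filter]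
    intro p _ h h'
    exact absurd h' (not_lt.mpr h.le)
  have hne : (Finset.univ.filter fun p : Fin n × Fin n => p.1 ≠ p.2).card = n * n - n := by
    have : (Finset.univ.filter fun p : Fin n × Fin n => p.1 ≠ p.2)
        = (Finset.univ : Finset (Fin n)).offDiag := by
      ext p
      simp [Finset.mem_offDiag]
    rw [this, Finset.offDiag_card]
    simp
  have := Finset.card_union_of_disjoint hdisj
  rw [hunion, hne] at this
  omega

/-- Konyagin–Ruzsa–Schlag: for any `n` distinct reals `x_1, …, x_n` there is `α ∈ ℝ`
such that every difference `α(x_j - x_k)` (for `j ≠ k`) is at distance at least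
`n⁻²` from every integer. -/
theorem stmt_15 (n : ℕ) (hn : 1 ≤ n) (x : Fin n → ℝ) (hx : Function.Injective x) :
    ∃ α : ℝ, ∀ j k : Fin n, j ≠ k →
      ∀ m : ℤ, (1 : ℝ) / (n : ℝ) ^ 2 ≤ |α * (x j - x k) - (m : ℝ)| := by
  classical
  rcases eq_or_lt_of_le hn with h1 | h2
  · -- n = 1 : vacuous
    refine ⟨0, fun j k hjk m => absurd ?_ hjk⟩
    have : Subsingleton (Fin n) := by rw [← h1]; infer_instance
    exact Subsingleton.elim j k
  -- n ≥ 2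
  have hn0 : (0 : ℝ) < n := by exact_mod_cast Nat.lt_of_lt_of_le Nat.zero_lt_one hn
  set δ : ℝ := 1 / (n : ℝ) ^ 2 with hδdef
  have hδ : 0 < δ := by positivity
  set P : Finset (Fin n × Fin n) := Finset.univ.filter fun p => p.1 < p.2 with hP
  have hPd : ∀ p ∈ P, x p.1 - x p.2 ≠ 0 := by
    intro p hp
    rw [hP, Finset.mem_filter] at hp
    exact sub_ne_zero_of_ne (hx.ne hp.2.ne)
  set C : ℝ := ∑ p ∈ P, (2 * δ + 1) * (2 * δ / |x p.1 - x p.2|) with hC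
  have hC0 : 0 ≤ C := Finset.sum_nonneg fun p _ => by positivity
  set T : ℝ := n * (C + 1) with hT
  have hT0 : 0 < T := by positivity
  set bad : Fin n × Fin n → Set ℝ :=
    fun p => {α : ℝ | α ∈ Icc 0 T ∧ ∃ m : ℤ, |α * (x p.1 - x p.2) - m| < δ} with hbad
  have hvol : volume (⋃ p ∈ P, bad p) < volume (Icc (0 : ℝ) T) := by
    calc volume (⋃ p ∈ P, bad p) ≤ ∑ p ∈ P, volume (bad p) := measure_biUnion_finset_le _ _
      _ ≤ ∑ p ∈ P, ENNReal.ofReal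
            ((T * |x p.1 - x p.2| + 2 * δ + 1) * (2 * δ / |x p.1 - x p.2|)) :=
          Finset.sum_le_sum fun p hp => badset_vol _ _ _ (hPd p hp) hδ hT0.le
      _ = ENNReal.ofReal (∑ p ∈ P, (T * |x p.1 - x p.2| + 2 * δ + 1)
            * (2 * δ / |x p.1 - x p.2|)) := by
          rw [ENNReal.ofReal_sum_of_nonneg]
          intro p hp
          have := abs_pos.mpr (hPd p hp)
          positivity
      _ < ENNReal.ofReal T := by
          rw [ENNReal.ofReal_lt_ofReal_iff hT0]
          have hsplit : ∀ p ∈ P, (T * |x p.1 - x p.2| + 2 * δ + 1) * (2 * δ / |x p.1 - x p.2|)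
              = 2 * δ * T + (2 * δ + 1) * (2 * δ / |x p.1 - x p.2|) := by
            intro p hp
            have h := abs_pos.mpr (hPd p hp)
            field_simp
            ring
          rw [Finset.sum_congr rfl hsplit, Finset.sum_add_distrib, Finset.sum_const, ← hC]
          have hcard : (P.card : ℝ) * (2 * δ) ≤ ((n : ℝ) - 1) / n := by
            have h2 : 2 * P.card = n * n - n := card_filter_lt n
            have hnn : (n : ℝ) * n - n = ((n * n - n : ℕ) : ℝ) := by
              push_cast [Nat.cast_sub (Nat.le_mul_of_pos_left n (Nat.lt_of_lt_of_le one_pos hn))]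
              ring
            have h2' : 2 * (P.card : ℝ) = (n : ℝ) * n - n := by
              rw [hnn]; exact_mod_cast congrArg (Nat.cast (R := ℝ)) h2
            have hne : (n : ℝ) ≠ 0 := ne_of_gt hn0
            rw [show (2 * δ) = 2 * (1 / (n:ℝ)^2) from rfl]
            have heq : (P.card : ℝ) * (2 * (1 / (n:ℝ)^2)) = ((n:ℝ) - 1) / n := by
              field_simp
              nlinarith [h2']
            exact le_of_eq heq
          have h1n : ((n : ℝ) - 1) / n * T + C < T := by
            have : ((n : ℝ) - 1) / n * T = T - (C + 1) := by
              rw [hT]; field_simp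
            rw [this]; linarith
          calc P.card • (2 * δ * T) + C = (P.card : ℝ) * (2 * δ) * T + C := by
                rw [nsmul_eq_mul]; ring
            _ ≤ ((n : ℝ) - 1) / n * T + C := by nlinarith
            _ < T := h1n
      _ = volume (Icc (0 : ℝ) T) := by rw [Real.volume_Icc, sub_zero]
  have hex : ∃ α ∈ Icc (0 : ℝ) T, α ∉ ⋃ p ∈ P, bad p := by
    by_contra h
    push_neg at h
    exact absurd (measure_mono fun α hα => h α hα) (not_le.mpr hvol)
  obtain ⟨α, hαI, hα⟩ := hex
  refine ⟨α, fun j k hjk m => ?_⟩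
  simp only [Set.mem_iUnion, not_exists] at hα
  rcases lt_or_gt_of_ne hjk with h | h
  · have hp : (j, k) ∈ P := by rw [hP, Finset.mem_filter]; exact ⟨Finset.mem_univ _, h⟩
    have := hα (j, k) hp
    rw [hbad] at this
    simp only [Set.mem_setOf_eq, not_and, not_exists, not_lt] at this
    exact this hαI m
  · have hp : (k, j) ∈ P := by rw [hP, Finset.mem_filter]; exact ⟨Finset.mem_univ _, h⟩
    have := hα (k, j) hp
    rw [hbad] at this
    simp only [Set.mem_setOf_eq, not_and, not_exists, not_lt] at this
    have h' := this hαI (-m)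
    have : |α * (x k - x j) - (-m : ℤ)| = |α * (x j - x k) - m| := by
      rw [← abs_neg]
      congr 1
      push_cast
      ring
    rw [this] at h'
    exact h'
end

section
/- If n is even, then the complete directed graph with loops on n vertices, K̃_n (vertex set [n], edge set [n] × [n], so n² directed edges including n loops), can be decomposed into edge-disjoint directed closed walks (cycles) each of length 4. -/
def gfun (k : ℕ) (ab : Fin (k+1) × Fin (k+1)) : Fin 4 → Fin (k+1) × Fin 2 :=
  ![(ab.1, 0), (ab.2, 0), (ab.1, 1), (ab.2 + 1, 1)]

def Ffun (k : ℕ) (p : (Fin (k+1) × Fin (k+1)) × Fin 4) :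
    (Fin (k+1) × Fin 2) × (Fin (k+1) × Fin 2) :=
  (gfun k p.1 p.2, gfun k p.1 (p.2 + 1))

def Finv (k : ℕ) (q : (Fin (k+1) × Fin 2) × (Fin (k+1) × Fin 2)) :
    (Fin (k+1) × Fin (k+1)) × Fin 4 :=
  match q with
  | ((x, ⟨0,_⟩), (y, ⟨0,_⟩)) => ((x, y), 0)
  | ((x, ⟨0,_⟩), (y, ⟨1,_⟩)) => ((y, x), 1)
  | ((x, ⟨1,_⟩), (y, ⟨1,_⟩)) => ((x, y - 1), 2)
  | ((x, ⟨1,_⟩), (y, ⟨0,_⟩)) => ((y, x - 1), 3)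

theorem Ffun_bij (k : ℕ) : Function.Bijective (Ffun k) := by
  apply Function.bijective_iff_has_inverse.mpr
  refine ⟨Finv k, ?_, ?_⟩
  · rintro ⟨⟨a, b⟩, i⟩
    fin_cases i <;> simp [Ffun, gfun, Finv]
  · rintro ⟨⟨x, s⟩, ⟨y, t⟩⟩
    fin_cases s <;> fin_cases t <;> simp [Ffun, gfun, Finv]

/-- If `n` is even, the complete directed graph with loops on `n` vertices
(edge set `Fin n × Fin n`) decomposes into edge-disjoint closed directed trails of
length 4: there are `n²/4` cyclic sequences of vertices of length 4 whose edges
`(T c i, T c (i+1))` enumerate each of the `n²` edges exactly once. -/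
theorem stmt_16 (n : ℕ) (hn : Even n) :
    ∃ T : Fin (n ^ 2 / 4) → ZMod 4 → Fin n,
      Function.Bijective
        (fun ci : Fin (n ^ 2 / 4) × ZMod 4 => (T ci.1 ci.2, T ci.1 (ci.2 + 1))) := by
  obtain ⟨m, rfl⟩ := hn
  rcases m with _ | k
  · refine ⟨fun c _ => (by exact c.elim0 : Fin (0+0)), ?_, ?_⟩
    · rintro ⟨c, i⟩; exact c.elim0
    · rintro ⟨v, w⟩; exact v.elim0
  · have hc : ((k+1) + (k+1)) ^ 2 / 4 = (k+1) * (k+1) := by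
      have : ((k+1) + (k+1)) ^ 2 = ((k+1) * (k+1)) * 4 := by ring
      rw [this, Nat.mul_div_cancel] ; norm_num
    let e : Fin ((k+1) + (k+1)) ≃ Fin (k+1) × Fin 2 :=
      (finCongr (by ring : (k+1)+(k+1) = (k+1)*2)).trans finProdFinEquiv.symm
    let d : Fin (((k+1)+(k+1)) ^ 2 / 4) ≃ Fin (k+1) × Fin (k+1) :=
      (finCongr hc).trans finProdFinEquiv.symm
    refine ⟨fun c i => e.symm (gfun k (d c) (show Fin 4 from i)), ?_⟩
    have key : (fun ci : Fin (((k+1)+(k+1)) ^ 2 / 4) × ZMod 4 =>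
        ((e.symm (gfun k (d ci.1) (show Fin 4 from ci.2)), e.symm (gfun k (d ci.1) (show Fin 4 from (ci.2 + 1 : ZMod 4)))) :
          Fin ((k+1)+(k+1)) × Fin ((k+1)+(k+1)))) =
        (Prod.map e.symm e.symm) ∘ (Ffun k) ∘ (fun ci => (d ci.1, ci.2)) := rfl
    rw [key]
    exact ((e.symm.bijective.prodMap e.symm.bijective).comp (Ffun_bij k)).comp
      ((d.prodCongr (Equiv.refl (Fin 4))).bijective)
end

section
/- If d divides n² with d ∈ {3, 5, 7} (hence d | n, since d is prime), then K̃_n, the complete directed graph with loops on n vertices, can be decomposed into edge-disjoint directed closed trails each of length d. -/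
namespace Stmt17

/-- State `(i, t, u, v)`: the current edge is `((i,u), (i+t,v))`
in coordinates `ZMod d × ZMod m` for the vertex set. -/
abbrev Q (d m : ℕ) := ZMod d × ZMod d × ZMod m × ZMod m

/-- One step along a trail: move to the next edge. -/
def step {d m : ℕ} (a b : ZMod d → ZMod m) : Q d m → Q d m
  | (i, t, u, v) => (i + t, t + 1, v, b t * u + a t * v)

lemma step_i {d m : ℕ} (a b : ZMod d → ZMod m) (x : Q d m) :
    (step a b x).1 = x.1 + x.2.1 := by
  obtain ⟨i, t, u, v⟩ := x; rfl

lemma step_t {d m : ℕ} (a b : ZMod d → ZMod m) (x : Q d m) :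
    (step a b x).2.1 = x.2.1 + 1 := by
  obtain ⟨i, t, u, v⟩ := x; rfl

lemma step_u {d m : ℕ} (a b : ZMod d → ZMod m) (x : Q d m) :
    (step a b x).2.2.1 = x.2.2.2 := by
  obtain ⟨i, t, u, v⟩ := x; rfl

lemma step_injective {d m : ℕ} (a b : ZMod d → ZMod m)
    (hb : ∀ t, b t * b t = 1) : Function.Injective (step a b) := by
  rintro ⟨i, t, u, v⟩ ⟨i', t', u', v'⟩ h
  simp only [step, Prod.mk.injEq] at h
  obtain ⟨h1, h2, h3, h4⟩ := h
  have ht : t = t' := by linear_combination h2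
  subst ht h3
  have hi : i = i' := by linear_combination h1
  have hu : u = u' := by
    have := congrArg (fun x => b t * x) h4
    simp only [mul_add, ← mul_assoc, hb t, one_mul] at this
    linear_combination this
  simp [hi, hu]

lemma t_iterate {d m : ℕ} (a b : ZMod d → ZMod m) (q : Q d m) (j : ℕ) :
    ((step a b)^[j] q).2.1 = q.2.1 + j := by
  induction j with
  | zero => simp
  | succ j ih =>
    rw [Function.iterate_succ_apply', step_t, ih]
    push_cast
    ring

lemma iterate_d_mul {d m : ℕ} (a b : ZMod d → ZMod m)
    (hp : ∀ q : Q d m, (step a b)^[d] q = q) (s : ℕ) (q : Q d m) :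
    (step a b)^[d * s] q = q := by
  induction s with
  | zero => simp
  | succ s ih =>
    rw [Nat.mul_succ, Function.iterate_add_apply, hp, ih]

lemma iterate_mod {d m : ℕ} (a b : ZMod d → ZMod m)
    (hp : ∀ q : Q d m, (step a b)^[d] q = q) (j : ℕ) (q : Q d m) :
    (step a b)^[j] q = (step a b)^[j % d] q := by
  conv_lhs => rw [← Nat.mod_add_div j d]
  rw [Function.iterate_add_apply, iterate_d_mul a b hp]

/-- `ZMod k ≃ Fin k`. -/
def zmodFin (k : ℕ) [NeZero k] : ZMod k ≃ Fin k where
  toFun z := ⟨z.val, ZMod.val_lt z⟩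
  invFun i := ((i : ℕ) : ZMod k)
  left_inv z := ZMod.natCast_zmod_val z
  right_inv i := by
    ext
    exact ZMod.val_cast_of_lt i.isLt

theorem core (d m n : ℕ) (hd1 : 1 < d) (hm : 0 < m) (hn : n = d * m)
    (a b : ZMod d → ZMod m)
    (hb : ∀ t, b t * b t = 1)
    (hp : ∀ q : Q d m, (step a b)^[d] q = q) :
    ∃ T : Fin (n ^ 2 / d) → ZMod d → Fin n,
      Function.Bijective
        (fun ci : Fin (n ^ 2 / d) × ZMod d => (T ci.1 ci.2, T ci.1 (ci.2 + 1))) := by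
  haveI : NeZero d := ⟨by omega⟩
  haveI : NeZero m := ⟨by omega⟩
  have hd0 : 0 < d := by omega
  have hcard : n ^ 2 / d = d * (m * m) := by
    have h2 : n ^ 2 = (d * (m * m)) * d := by rw [hn]; ring
    rw [h2, Nat.mul_div_cancel _ hd0]
  -- vertex equiv
  let eV : ZMod d × ZMod m ≃ Fin n :=
    ((zmodFin d).prodCongr (zmodFin m)).trans (finProdFinEquiv.trans (finCongr hn.symm))
  -- trail-index equiv
  let eC : Fin (n ^ 2 / d) ≃ ZMod d × ZMod m × ZMod m :=
    ((finCongr hcard).trans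
      (finProdFinEquiv.symm.trans
        ((Equiv.refl (Fin d)).prodCongr finProdFinEquiv.symm))).trans
      (((zmodFin d).symm).prodCongr (((zmodFin m).symm).prodCongr (zmodFin m).symm))
  set f : Q d m → Q d m := step a b with hf
  have hfinj : Function.Injective f := step_injective a b hb
  -- start state of trail c
  let E : Fin (n ^ 2 / d) → Q d m := fun c => ((eC c).1, 0, (eC c).2.1, (eC c).2.2)
  have hEinj : Function.Injective E := by
    intro c c' h
    apply eC.injective
    simp only [E, Prod.mk.injEq] at h
    exact Prod.ext h.1 (Prod.ext h.2.2.1 h.2.2.2)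
  let T : Fin (n ^ 2 / d) → ZMod d → Fin n := fun c k =>
    eV ((f^[k.val] (E c)).1, (f^[k.val] (E c)).2.2.1)
  have hsucc : ∀ (c : Fin (n ^ 2 / d)) (k : ZMod d),
      f^[(k + 1).val] (E c) = f (f^[k.val] (E c)) := by
    intro c k
    rw [show f (f^[k.val] (E c)) = f^[k.val + 1] (E c) from
      (Function.iterate_succ_apply' f k.val (E c)).symm]
    rw [iterate_mod a b hp (k.val + 1), iterate_mod a b hp (k + 1).val]
    have h1 : (k + 1 : ZMod d) = ((k.val + 1 : ℕ) : ZMod d) := by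
      push_cast [ZMod.natCast_zmod_val]
      ring
    suffices hval : (k + 1).val % d = (k.val + 1) % d by rw [hval]
    rw [Nat.mod_eq_of_lt (ZMod.val_lt (k + 1)), h1, ZMod.val_natCast]
  refine ⟨T, ?_⟩
  rw [Fintype.bijective_iff_injective_and_card]
  constructor
  · rintro ⟨c, k⟩ ⟨c', k'⟩ h
    simp only [T, Prod.mk.injEq] at h
    obtain ⟨h1, h2⟩ := h
    rw [hsucc c k, hsucc c' k'] at h2
    have h1' := eV.injective h1
    have h2' := eV.injective h2
    rw [step_i, step_i, step_u, step_u] at h2'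
    set q := f^[k.val] (E c) with hq
    set q' := f^[k'.val] (E c') with hq'
    simp only [Prod.mk.injEq] at h1' h2'
    obtain ⟨e1, e3⟩ := h1'
    obtain ⟨e24, e4⟩ := h2'
    have e2 : q.2.1 = q'.2.1 := by
      rw [e1] at e24
      exact add_left_cancel e24
    have hqq : q = q' := Prod.ext e1 (Prod.ext e2 (Prod.ext e3 e4))
    -- t-components give k = k'
    have hk : k = k' := by
      have t1 : q.2.1 = (k.val : ZMod d) := by
        rw [hq, t_iterate]
        simp [E]
      have t2 : q'.2.1 = (k'.val : ZMod d) := by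
        rw [hq', t_iterate]
        simp [E]
      have : (k.val : ZMod d) = (k'.val : ZMod d) := by rw [← t1, ← t2, hqq]
      rwa [ZMod.natCast_zmod_val, ZMod.natCast_zmod_val] at this
    subst hk
    have : E c = E c' := (hfinj.iterate k.val) hqq
    exact Prod.ext (hEinj this) rfl
  · simp only [Fintype.card_prod, Fintype.card_fin, ZMod.card]
    rw [hcard, hn]
    ring

end Stmt17

namespace Stmt17

def a3 {m : ℕ} : ZMod 3 → ZMod m := fun t => if t = 0 then 1 else if t = 1 then 1 else -1
def b3 {m : ℕ} : ZMod 3 → ZMod m := fun t => if t = 0 then 1 else if t = 1 then -1 else 1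

def a5 {m : ℕ} : ZMod 5 → ZMod m := fun t =>
  if t = 0 then 1 else if t = 1 then 1 else if t = 2 then -1 else 0
def b5 {m : ℕ} : ZMod 5 → ZMod m := fun t =>
  if t = 0 then 1 else if t = 1 then -1 else 1

def a7 {m : ℕ} : ZMod 7 → ZMod m := fun t =>
  if t = 0 then 1 else if t = 1 then 1 else if t = 2 then -1 else 0
def b7 {m : ℕ} : ZMod 7 → ZMod m := fun t =>
  if t = 0 then 1 else if t = 1 then -1 else 1

lemma hb3 {m : ℕ} : ∀ t : ZMod 3, (b3 (m := m)) t * b3 t = 1 := by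
  intro t
  have ht : t = 0 ∨ t = 1 ∨ t = 2 := by revert t; decide
  rcases ht with h | h | h <;> subst h <;>
    simp (config := { decide := true }) [b3]

lemma hb5 {m : ℕ} : ∀ t : ZMod 5, (b5 (m := m)) t * b5 t = 1 := by
  intro t
  have ht : t = 0 ∨ t = 1 ∨ t = 2 ∨ t = 3 ∨ t = 4 := by revert t; decide
  rcases ht with h | h | h | h | h <;> subst h <;>
    simp (config := { decide := true }) [b5]

lemma hb7 {m : ℕ} : ∀ t : ZMod 7, (b7 (m := m)) t * b7 t = 1 := by
  intro t
  have ht : t = 0 ∨ t = 1 ∨ t = 2 ∨ t = 3 ∨ t = 4 ∨ t = 5 ∨ t = 6 := by revert t; decide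
  rcases ht with h | h | h | h | h | h | h <;> subst h <;>
    simp (config := { decide := true }) [b7]

lemma hp3 {m : ℕ} : ∀ q : Q 3 m, (step a3 b3)^[3] q = q := by
  rintro ⟨i, t, u, v⟩
  show step a3 b3 (step a3 b3 (step a3 b3 (i, t, u, v))) = (i, t, u, v)
  have h : (3 : ZMod 3) = 0 := by decide
  have ht : t = 0 ∨ t = 1 ∨ t = 2 := by revert t; decide
  rcases ht with h' | h' | h' <;> subst h' <;>
    · simp (config := { decide := true }) only [step, a3, b3, Prod.mk.injEq, if_true, if_false]
      refine ⟨by first | linear_combination h | linear_combination 2*h | linear_combination 3*h,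
        by decide, by ring, by ring⟩

lemma hp5 {m : ℕ} : ∀ q : Q 5 m, (step a5 b5)^[5] q = q := by
  rintro ⟨i, t, u, v⟩
  show step a5 b5 (step a5 b5 (step a5 b5 (step a5 b5 (step a5 b5 (i, t, u, v))))) = (i, t, u, v)
  have h : (5 : ZMod 5) = 0 := by decide
  have ht : t = 0 ∨ t = 1 ∨ t = 2 ∨ t = 3 ∨ t = 4 := by revert t; decide
  rcases ht with h' | h' | h' | h' | h' <;> subst h' <;>
    · simp (config := { decide := true }) only [step, a5, b5, Prod.mk.injEq, if_true, if_false]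
      refine ⟨by first | linear_combination h | linear_combination 2*h | linear_combination 3*h |
          linear_combination 4*h | linear_combination 5*h | linear_combination 6*h,
        by decide, by ring, by ring⟩

lemma hp7 {m : ℕ} : ∀ q : Q 7 m, (step a7 b7)^[7] q = q := by
  rintro ⟨i, t, u, v⟩
  show step a7 b7 (step a7 b7 (step a7 b7 (step a7 b7 (step a7 b7 (step a7 b7
    (step a7 b7 (i, t, u, v))))))) = (i, t, u, v)
  have h : (7 : ZMod 7) = 0 := by decide
  have ht : t = 0 ∨ t = 1 ∨ t = 2 ∨ t = 3 ∨ t = 4 ∨ t = 5 ∨ t = 6 := by revert t; decide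
  rcases ht with h' | h' | h' | h' | h' | h' | h' <;> subst h' <;>
    · simp (config := { decide := true }) only [step, a7, b7, Prod.mk.injEq, if_true, if_false]
      refine ⟨by first | linear_combination 3*h | linear_combination 4*h | linear_combination 5*h |
          linear_combination 6*h | linear_combination 7*h | linear_combination 8*h |
          linear_combination 9*h,
        by decide, by ring, by ring⟩

end Stmt17

/-- If `d ∈ {3, 5, 7}` divides `n²`, then the complete directed graph with loops on
`n` vertices decomposes into edge-disjoint closed directed trails of length `d`:
there are `n²/d` cyclic vertex sequences of length `d` whose edges
`(T c i, T c (i+1))` enumerate each of the `n²` edges exactly once. -/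
theorem stmt_17 (n d : ℕ) (hd : d = 3 ∨ d = 5 ∨ d = 7) (hdvd : d ∣ n ^ 2) :
    ∃ T : Fin (n ^ 2 / d) → ZMod d → Fin n,
      Function.Bijective
        (fun ci : Fin (n ^ 2 / d) × ZMod d => (T ci.1 ci.2, T ci.1 (ci.2 + 1))) := by
  have hdp : d.Prime := by rcases hd with h | h | h <;> subst h <;> norm_num
  rcases Nat.eq_zero_or_pos n with hn0 | hn0
  · subst hn0
    have h0 : (0 : ℕ) ^ 2 / d = 0 := by simp
    refine ⟨fun c _ => (Fin.cast h0 c).elim0, ?_, ?_⟩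
    · intro x y _
      exact (Fin.cast h0 x.1).elim0
    · intro y
      exact y.1.elim0
  · have hdn : d ∣ n := hdp.dvd_of_dvd_pow hdvd
    have hn : n = d * (n / d) := (Nat.mul_div_cancel' hdn).symm
    have hm : 0 < n / d := Nat.div_pos (Nat.le_of_dvd hn0 hdn) hdp.pos
    rcases hd with h | h | h <;> subst h
    · exact Stmt17.core 3 (n / 3) n (by norm_num) hm hn Stmt17.a3 Stmt17.b3
        Stmt17.hb3 Stmt17.hp3
    · exact Stmt17.core 5 (n / 5) n (by norm_num) hm hn Stmt17.a5 Stmt17.b5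
        Stmt17.hb5 Stmt17.hp5
    · exact Stmt17.core 7 (n / 7) n (by norm_num) hm hn Stmt17.a7 Stmt17.b7
        Stmt17.hb7 Stmt17.hp7
end
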